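/- arXiv:1108.4867 — 10 statements merged into one kernel-verified Lean document; each statement's English description precedes it below -/
import Mathlib

section
/- Let S be a nonempty set and J a predicate (equation) on S which is consistent, i.e., there exists some x ∈ S with J(x). Then there exists a function f : S → S satisfying the reproductivity condition f ∘ f = f such that for all x ∈ S, J(x) holds if and only if x = f(x). -/
/-- Prešić: for any consistent equation `J` on a nonempty set `S` there is a
reproductive equation `x = f x` equivalent to it. -/
theorem presic_reproductive_exists {S : Type*} [Nonempty S] (J : S → Prop)
    (hJ : ∃ x, J x) :
    ∃ f : S → S, f ∘ f = f ∧ ∀ x, J x ↔ x = f x := by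
  classical
  obtain ⟨x₀, hx₀⟩ := hJ
  refine ⟨fun x => if J x then x else x₀, ?_, ?_⟩
  · funext x
    by_cases h : J x <;> simp [h, hx₀]
  · intro x
    constructor
    · intro h; simp [h]
    · intro h
      by_cases hx : J x
      · exact hx
      · simp [hx] at h; subst h; exact absurd hx₀ hx
end

section
/- (Penrose, consistency criterion) Let A be an m × n complex matrix, B a p × q complex matrix and C an m × q complex matrix. The matrix equation A X B = C has a solution X (an n × p complex matrix) if and only if there exist a {1}-inverse A⁽¹⁾ of A and a {1}-inverse B⁽¹⁾ of B such that A A⁽¹⁾ C B⁽¹⁾ B = C. -/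
/- Take `g = s ∘ r`, where `r` projects `W` onto `range f` and `s` is a section of `f` over
`range f`; both exist because subspaces over a division ring are complemented. -/
theorem LinearMap.exists_comp_comp_eq_self {K V W : Type*} [DivisionRing K]
    [AddCommGroup V] [Module K V] [AddCommGroup W] [Module K W] (f : V →ₗ[K] W) :
    ∃ g : W →ₗ[K] V, f ∘ₗ g ∘ₗ f = f := by
  obtain ⟨s, hs⟩ := f.rangeRestrict.exists_rightInverse_of_surjective f.range_rangeRestrict
  obtain ⟨r, hr⟩ := (range f).subtype.exists_leftInverse_of_injective (range f).ker_subtype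
  refine ⟨s ∘ₗ r, ?_⟩
  have hf : (range f).subtype ∘ₗ f.rangeRestrict = f := f.subtype_comp_codRestrict _ _
  calc f ∘ₗ (s ∘ₗ r) ∘ₗ f
      = (range f).subtype ∘ₗ (f.rangeRestrict ∘ₗ s) ∘ₗ (r ∘ₗ (range f).subtype) ∘ₗ
          f.rangeRestrict := LinearMap.ext fun _ => rfl
    _ = f := by rw [hs, hr, LinearMap.id_comp, LinearMap.id_comp, hf]

theorem Matrix.exists_mul_mul_eq_self {K m n : Type*} [Field K] [Fintype m] [Fintype n]
    [DecidableEq m] [DecidableEq n] (A : Matrix m n K) :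
    ∃ G : Matrix n m K, A * G * A = A := by
  obtain ⟨g, hg⟩ := (toLin' A).exists_comp_comp_eq_self
  refine ⟨LinearMap.toMatrix' g, ?_⟩
  simpa [LinearMap.toMatrix'_comp, Matrix.mul_assoc] using congrArg LinearMap.toMatrix' hg

/-- Penrose: the matrix equation `A X B = C` is consistent iff for some choice of
`{1}`-inverses `A⁽¹⁾`, `B⁽¹⁾` one has `A A⁽¹⁾ C B⁽¹⁾ B = C`. -/
theorem penrose_consistency {m n p q : ℕ}
    (A : Matrix (Fin m) (Fin n) ℂ) (B : Matrix (Fin p) (Fin q) ℂ)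
    (C : Matrix (Fin m) (Fin q) ℂ) :
    (∃ X : Matrix (Fin n) (Fin p) ℂ, A * X * B = C) ↔
      ∃ (A1 : Matrix (Fin n) (Fin m) ℂ) (B1 : Matrix (Fin q) (Fin p) ℂ),
        A * A1 * A = A ∧ B * B1 * B = B ∧ A * A1 * C * B1 * B = C := by
  constructor
  · rintro ⟨X, rfl⟩
    obtain ⟨A1, hA⟩ := A.exists_mul_mul_eq_self
    obtain ⟨B1, hB⟩ := B.exists_mul_mul_eq_self
    refine ⟨A1, B1, hA, hB, ?_⟩
    calc A * A1 * (A * X * B) * B1 * B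
        = (A * A1 * A) * X * (B * B1 * B) := by simp only [Matrix.mul_assoc]
      _ = A * X * B := by rw [hA, hB]
  · rintro ⟨A1, B1, -, -, hC⟩
    exact ⟨A1 * C * B1, by simpa only [Matrix.mul_assoc] using hC⟩
end

section
/- (Penrose, general solution) Let A be an m × n complex matrix, B a p × q complex matrix, C an m × q complex matrix, and let A⁽¹⁾ and B⁽¹⁾ be {1}-inverses of A and B respectively such that A A⁽¹⁾ C B⁽¹⁾ B = C. Then an n × p complex matrix X satisfies A X B = C if and only if there exists an n × p complex matrix Y with X = A⁽¹⁾ C B⁽¹⁾ + Y − A⁽¹⁾ A Y B B⁽¹⁾. -/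
/-- Penrose: general solution of `A X B = C`. -/
theorem penrose_general_solution {m n p q : ℕ}
    (A : Matrix (Fin m) (Fin n) ℂ) (B : Matrix (Fin p) (Fin q) ℂ)
    (C : Matrix (Fin m) (Fin q) ℂ)
    (A1 : Matrix (Fin n) (Fin m) ℂ) (B1 : Matrix (Fin q) (Fin p) ℂ)
    (hA1 : A * A1 * A = A) (hB1 : B * B1 * B = B)
    (hC : A * A1 * C * B1 * B = C) (X : Matrix (Fin n) (Fin p) ℂ) :
    A * X * B = C ↔
      ∃ Y : Matrix (Fin n) (Fin p) ℂ,
        X = A1 * C * B1 + Y - A1 * A * Y * B * B1 := by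
  constructor
  · intro h
    refine ⟨X, ?_⟩
    have h2 : A1 * A * X * B * B1 = A1 * C * B1 := by
      rw [← h]; simp only [Matrix.mul_assoc]
    rw [h2]; abel
  · rintro ⟨Y, rfl⟩
    have : A * (A1 * C * B1 + Y - A1 * A * Y * B * B1) * B =
        A * A1 * C * B1 * B + A * Y * B - (A * A1 * A) * Y * (B * B1 * B) := by
      simp only [Matrix.mul_add, Matrix.mul_sub, Matrix.add_mul, Matrix.sub_mul,
        Matrix.mul_assoc]
    rw [this, hA1, hB1, hC]; abel
end

section
/- Let A be an m × n complex matrix, B a p × q complex matrix, C an m × q complex matrix, A⁽¹⁾ and B⁽¹⁾ fixed {1}-inverses of A and B, and let X₀ satisfy A X₀ B = C. Define g(Y) = X₀ + Y − A⁽¹⁾ A Y B B⁽¹⁾ for n × p complex matrices Y. Then g satisfies the condition of reproductivity g ∘ g = g if and only if X₀ = A⁽¹⁾ C B⁽¹⁾. -/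
/-- The function `g(Y) = X₀ + Y - A⁽¹⁾ A Y B B⁽¹⁾` is reproductive iff
`X₀ = A⁽¹⁾ C B⁽¹⁾`. -/
theorem reproductivity_iff_particular {m n p q : ℕ}
    (A : Matrix (Fin m) (Fin n) ℂ) (B : Matrix (Fin p) (Fin q) ℂ)
    (C : Matrix (Fin m) (Fin q) ℂ)
    (A1 : Matrix (Fin n) (Fin m) ℂ) (B1 : Matrix (Fin q) (Fin p) ℂ)
    (hA1 : A * A1 * A = A) (hB1 : B * B1 * B = B)
    (X0 : Matrix (Fin n) (Fin p) ℂ) (hX0 : A * X0 * B = C)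
    (g : Matrix (Fin n) (Fin p) ℂ → Matrix (Fin n) (Fin p) ℂ)
    (hg : ∀ Y, g Y = X0 + Y - A1 * A * Y * B * B1) :
    g ∘ g = g ↔ X0 = A1 * C * B1 := by
  have hA' : ∀ Z : Matrix (Fin n) (Fin p) ℂ, A * (A1 * (A * Z)) = A * Z := by
    intro Z
    rw [← Matrix.mul_assoc, ← Matrix.mul_assoc, hA1]
  have hB' : B * (B1 * (B * B1)) = B * B1 := by
    rw [← Matrix.mul_assoc, ← Matrix.mul_assoc, hB1]
  have key : ∀ Y : Matrix (Fin n) (Fin p) ℂ,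
      A1 * A * (A1 * A * Y * B * B1) * B * B1 = A1 * A * Y * B * B1 := by
    intro Y
    simp only [Matrix.mul_assoc]
    rw [hB', hA']
  have hCe : A1 * C * B1 = A1 * A * X0 * B * B1 := by
    rw [← hX0]; simp only [Matrix.mul_assoc]
  constructor
  · intro h
    have h0 : g 0 = X0 := by simp [hg]
    have h1 := congrFun h 0
    simp only [Function.comp_apply, h0, hg X0] at h1
    -- h1 : X0 + X0 - A1 * A * X0 * B * B1 = X0
    rw [hCe]
    linear_combination (norm := abel) h1
  · intro h
    have hPX0 : A1 * A * X0 * B * B1 = X0 := by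
      rw [h, hCe]
      simpa only [Matrix.mul_assoc] using key X0
    funext Y
    simp only [Function.comp_apply, hg]
    simp only [Matrix.mul_add, Matrix.mul_sub, Matrix.add_mul, Matrix.sub_mul]
    rw [key, hPX0]
    abel
end

section
/- (Prešić, E2) Let A be an n × n complex matrix and A⁽¹⁾ any {1}-inverse of A. An n × n complex matrix X satisfies X A = 0 if and only if there exists an n × n complex matrix Y with X = Y − Y A A⁽¹⁾. -/
/-- Prešić (E₂): `X A = 0` iff `X = Y - Y A A⁽¹⁾` for some `Y`. -/
theorem presic_E2 {n : ℕ} (A A1 : Matrix (Fin n) (Fin n) ℂ)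
    (hA1 : A * A1 * A = A) (X : Matrix (Fin n) (Fin n) ℂ) :
    X * A = 0 ↔ ∃ Y : Matrix (Fin n) (Fin n) ℂ, X = Y - Y * A * A1 := by
  constructor
  · intro h
    exact ⟨X, by rw [h]; simp⟩
  · rintro ⟨Y, rfl⟩
    have : Y * A * A1 * A = Y * A := by
      rw [mul_assoc, mul_assoc, ← mul_assoc A, hA1]
    rw [sub_mul, this, sub_self]
end

section
/- (Prešić, E3) Let A be an n × n complex matrix and A⁽¹⁾ any {1}-inverse of A. An n × n complex matrix X satisfies A X A = A if and only if there exists an n × n complex matrix Y with X = A⁽¹⁾ + Y − A⁽¹⁾ A Y A A⁽¹⁾. -/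
/-- Prešić (E₃): `A X A = A` iff `X = A⁽¹⁾ + Y - A⁽¹⁾ A Y A A⁽¹⁾` for some `Y`. -/
theorem presic_E3 {n : ℕ} (A A1 : Matrix (Fin n) (Fin n) ℂ)
    (hA1 : A * A1 * A = A) (X : Matrix (Fin n) (Fin n) ℂ) :
    A * X * A = A ↔
      ∃ Y : Matrix (Fin n) (Fin n) ℂ, X = A1 + Y - A1 * A * Y * A * A1 := by
  constructor
  · intro hX
    refine ⟨X - A1, ?_⟩
    have h1 : A1 * A * (X - A1) * A * A1
        = A1 * (A * X * A) * A1 - A1 * (A * A1 * A) * A1 := by noncomm_ring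
    rw [h1, hX, hA1]
    noncomm_ring
  · rintro ⟨Y, rfl⟩
    have h1 : A * (A1 + Y - A1 * A * Y * A * A1) * A
        = A * A1 * A + A * Y * A - (A * A1 * A) * Y * (A * A1 * A) := by noncomm_ring
    rw [h1, hA1]
    noncomm_ring
end

section
/- Let A be an m × n complex matrix, B a p × q complex matrix, C an m × q complex matrix, and A⁽¹⁾, B⁽¹⁾ {1}-inverses of A and B with A A⁽¹⁾ C B⁽¹⁾ B = C. Define f(X) = X − A⁽¹⁾ (A X B − C) B⁽¹⁾ for n × p complex matrices X. Then f satisfies the condition of reproductivity f ∘ f = f, and for every n × p complex matrix X, A X B = C holds if and only if X = f(X). -/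
/-- `f(X) = X - A⁽¹⁾ (A X B - C) B⁽¹⁾` is reproductive and
`A X B = C ↔ X = f X`. -/
theorem reproductive_equivalence_AXB_eq_C {m n p q : ℕ}
    (A : Matrix (Fin m) (Fin n) ℂ) (B : Matrix (Fin p) (Fin q) ℂ)
    (C : Matrix (Fin m) (Fin q) ℂ)
    (A1 : Matrix (Fin n) (Fin m) ℂ) (B1 : Matrix (Fin q) (Fin p) ℂ)
    (hA1 : A * A1 * A = A) (hB1 : B * B1 * B = B)
    (hC : A * A1 * C * B1 * B = C)
    (f : Matrix (Fin n) (Fin p) ℂ → Matrix (Fin n) (Fin p) ℂ)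
    (hf : ∀ X, f X = X - A1 * (A * X * B - C) * B1) :
    f ∘ f = f ∧ ∀ X, A * X * B = C ↔ X = f X := by
  have key : ∀ X, A * f X * B = C := by
    intro X
    rw [hf]
    have h1 : A * (X - A1 * (A * X * B - C) * B1) * B
        = A * X * B - (A * A1 * A) * X * (B * B1 * B)
          + (A * A1) * C * (B1 * B) := by
      simp only [Matrix.mul_sub, Matrix.sub_mul, Matrix.mul_assoc]
      abel
    rw [h1, hA1, hB1]
    have h2 : A * A1 * C * (B1 * B) = C := by
      rw [← Matrix.mul_assoc]; exact hC
    rw [h2]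
    abel
  constructor
  · funext X
    simp only [Function.comp_apply]
    rw [hf (f X), key X]
    simp
  · intro X
    constructor
    · intro h
      rw [hf, h]
      simp
    · intro h
      conv_lhs => rw [h]
      exact key X
end

section
/- (Ben-Israel–Greville) Let A, B, D, E be complex matrices of suitable sizes (A is m × n, B is m × n, D is n × s, E is n × s, so that X is n × n), let A⁽¹⁾ and D⁽¹⁾ be {1}-inverses of A and D, and suppose X₀ is a particular solution of the system A X = B and X D = E. Then X satisfies A X = B and X D = E if and only if there exists a matrix Y (of the same size as X) with X = X₀ + (I − A⁽¹⁾ A) Y (I − D D⁽¹⁾). -/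
/-- Ben-Israel–Greville: general solution of the system `A X = B ∧ X D = E`
from a particular solution `X₀`. -/
theorem ben_israel_greville_system {m n s : ℕ}
    (A : Matrix (Fin m) (Fin n) ℂ) (B : Matrix (Fin m) (Fin n) ℂ)
    (D : Matrix (Fin n) (Fin s) ℂ) (E : Matrix (Fin n) (Fin s) ℂ)
    (A1 : Matrix (Fin n) (Fin m) ℂ) (D1 : Matrix (Fin s) (Fin n) ℂ)
    (hA1 : A * A1 * A = A) (hD1 : D * D1 * D = D)
    (X0 : Matrix (Fin n) (Fin n) ℂ) (hX0 : A * X0 = B ∧ X0 * D = E)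
    (X : Matrix (Fin n) (Fin n) ℂ) :
    (A * X = B ∧ X * D = E) ↔
      ∃ Y : Matrix (Fin n) (Fin n) ℂ,
        X = X0 + (1 - A1 * A) * Y * (1 - D * D1) := by
  constructor
  · rintro ⟨h1, h2⟩
    refine ⟨X - X0, ?_⟩
    have hA : A * (X - X0) = 0 := by rw [Matrix.mul_sub, h1, hX0.1, sub_self]
    have hD : (X - X0) * D = 0 := by rw [Matrix.sub_mul, h2, hX0.2, sub_self]
    have key : (1 - A1 * A) * (X - X0) * (1 - D * D1) = X - X0 := by
      rw [Matrix.sub_mul, Matrix.one_mul, Matrix.mul_assoc A1, hA,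
        Matrix.mul_zero, sub_zero, Matrix.mul_sub, Matrix.mul_one,
        ← Matrix.mul_assoc, hD, Matrix.zero_mul, sub_zero]
    rw [key]; abel
  · rintro ⟨Y, rfl⟩
    have h1 : A * (1 - A1 * A) = 0 := by
      rw [Matrix.mul_sub, Matrix.mul_one, ← Matrix.mul_assoc, hA1, sub_self]
    have h2 : (1 - D * D1) * D = 0 := by
      rw [Matrix.sub_mul, Matrix.one_mul, Matrix.mul_assoc, ← Matrix.mul_assoc, hD1, sub_self]
    have hAz : A * ((1 - A1 * A) * Y * (1 - D * D1)) = 0 := by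
      rw [← Matrix.mul_assoc, ← Matrix.mul_assoc, h1, Matrix.zero_mul,
        Matrix.zero_mul]
    have hDz : (1 - A1 * A) * Y * (1 - D * D1) * D = 0 := by
      rw [Matrix.mul_assoc, Matrix.mul_assoc, h2, Matrix.mul_zero,
        Matrix.mul_zero]
    constructor
    · rw [Matrix.mul_add, hAz, add_zero, hX0.1]
    · rw [Matrix.add_mul, hDz, add_zero, hX0.2]
end

section
/- Let A, B, D, E be complex matrices of suitable sizes, let A⁽¹⁾ and D⁽¹⁾ be {1}-inverses of A and D, and suppose the system A X = B and X D = E is consistent (has at least one solution X). Define f(Y) = A⁽¹⁾ B + E D⁽¹⁾ − A⁽¹⁾ A E D⁽¹⁾ + (I − A⁽¹⁾ A) Y (I − D D⁽¹⁾). Then f satisfies the condition of reproductivity f ∘ f = f, and X satisfies A X = B and X D = E if and only if X = f(X); consequently, the general solution of the system is X = f(Y) for arbitrary Y. -/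
/-- Reproductive general solution of the consistent system `A X = B ∧ X D = E`. -/
theorem reproductive_solution_system {m n s : ℕ}
    (A : Matrix (Fin m) (Fin n) ℂ) (B : Matrix (Fin m) (Fin n) ℂ)
    (D : Matrix (Fin n) (Fin s) ℂ) (E : Matrix (Fin n) (Fin s) ℂ)
    (A1 : Matrix (Fin n) (Fin m) ℂ) (D1 : Matrix (Fin s) (Fin n) ℂ)
    (hA1 : A * A1 * A = A) (hD1 : D * D1 * D = D)
    (hcons : ∃ X : Matrix (Fin n) (Fin n) ℂ, A * X = B ∧ X * D = E)
    (f : Matrix (Fin n) (Fin n) ℂ → Matrix (Fin n) (Fin n) ℂ)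
    (hf : ∀ Y, f Y = A1 * B + E * D1 - A1 * A * E * D1 +
        (1 - A1 * A) * Y * (1 - D * D1)) :
    f ∘ f = f ∧ (∀ X, (A * X = B ∧ X * D = E) ↔ X = f X) ∧
      (∀ X, (A * X = B ∧ X * D = E) ↔ ∃ Y, X = f Y) := by
  obtain ⟨X₀, hX₀A, hX₀D⟩ := hcons
  have hB' : A * (A1 * B) = B := by
    rw [← hX₀A, ← Matrix.mul_assoc, ← Matrix.mul_assoc, hA1]
  have hE' : E * (D1 * D) = E := by
    rw [← hX₀D, Matrix.mul_assoc, ← Matrix.mul_assoc D, hD1]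
  have hBD : B * D = A * E := by
    rw [← hX₀A, ← hX₀D, Matrix.mul_assoc]
  have hA1' : ∀ (k : ℕ) (Z : Matrix (Fin n) (Fin k) ℂ), A * (A1 * (A * Z)) = A * Z := by
    intro k Z
    rw [← Matrix.mul_assoc, ← Matrix.mul_assoc, hA1]
  have hD1r : D * (D1 * D) = D := by
    rw [← Matrix.mul_assoc, hD1]
  -- f Y is always a solution
  have key1 : ∀ Y, A * f Y = B := by
    intro Y
    rw [hf]
    simp only [Matrix.mul_add, Matrix.add_mul, Matrix.mul_sub, Matrix.sub_mul,
      Matrix.mul_one, Matrix.one_mul, Matrix.mul_assoc, hA1', hB']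
    abel
  have key2 : ∀ Y, f Y * D = E := by
    intro Y
    rw [hf]
    simp only [Matrix.mul_add, Matrix.add_mul, Matrix.mul_sub, Matrix.sub_mul,
      Matrix.mul_one, Matrix.one_mul, Matrix.mul_assoc, hD1r, hE', hBD]
    abel
  -- f fixes solutions
  have key3 : ∀ X, A * X = B → X * D = E → f X = X := by
    intro X hXA hXD
    rw [hf, ← hXA, ← hXD]
    simp only [Matrix.mul_add, Matrix.add_mul, Matrix.mul_sub, Matrix.sub_mul,
      Matrix.mul_one, Matrix.one_mul, Matrix.mul_assoc]
    abel
  refine ⟨?_, ?_, ?_⟩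
  · funext Y
    exact key3 (f Y) (key1 Y) (key2 Y)
  · intro X
    constructor
    · rintro ⟨h1, h2⟩; exact (key3 X h1 h2).symm
    · intro h
      rw [h]
      exact ⟨key1 X, key2 X⟩
  · intro X
    constructor
    · rintro ⟨h1, h2⟩; exact ⟨X, (key3 X h1 h2).symm⟩
    · rintro ⟨Y, rfl⟩
      exact ⟨key1 Y, key2 Y⟩
end

section
/- (Kečkić) Let A be an n × n complex matrix and let Ā be a commutative {1}-inverse of A, i.e., A Ā A = A and A Ā = Ā A. Then an n × n complex matrix X satisfies both A X A = A and A X = X A if and only if there exists an n × n complex matrix Y with X = Y + Ā A Ā − Ā A Y − Y A Ā + Ā A Y A Ā. -/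
/-- Kečkić: general solution of the system `A X A = A ∧ A X = X A` via a
commutative `{1}`-inverse `Ā`. -/
theorem keckic_commuting_system {n : ℕ} (A Ab : Matrix (Fin n) (Fin n) ℂ)
    (hAb1 : A * Ab * A = A) (hAbc : A * Ab = Ab * A)
    (X : Matrix (Fin n) (Fin n) ℂ) :
    (A * X * A = A ∧ A * X = X * A) ↔
      ∃ Y : Matrix (Fin n) (Fin n) ℂ,
        X = Y + Ab * A * Ab - Ab * A * Y - Y * A * Ab + Ab * A * Y * A * Ab := by
  constructor
  · rintro ⟨h1, h2⟩
    refine ⟨X, ?_⟩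
    have k3 : Ab * A * X * A * Ab = Ab * A * Ab := by
      calc Ab * A * X * A * Ab = Ab * (A * X * A) * Ab := by noncomm_ring
        _ = Ab * A * Ab := by rw [h1]
    have k2 : X * A * Ab = Ab * A * Ab := by
      calc X * A * Ab = A * X * Ab := by rw [h2]
        _ = (A * Ab * A) * X * Ab := by rw [hAb1]
        _ = (A * Ab) * (A * X) * Ab := by noncomm_ring
        _ = (A * Ab) * (X * A) * Ab := by rw [h2]
        _ = Ab * (A * X * A) * Ab := by rw [hAbc]; noncomm_ring
        _ = Ab * A * Ab := by rw [h1]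
    have k1 : Ab * A * X = Ab * A * Ab := by
      calc Ab * A * X = Ab * (A * X) := by noncomm_ring
        _ = Ab * (X * A) := by rw [h2]
        _ = Ab * X * (A * Ab * A) := by rw [hAb1]; noncomm_ring
        _ = Ab * (X * A) * (Ab * A) := by noncomm_ring
        _ = Ab * (A * X) * (Ab * A) := by rw [h2]
        _ = Ab * (A * X * A) * Ab := by rw [← hAbc]; noncomm_ring
        _ = Ab * A * Ab := by rw [h1]
    rw [k3, k1, k2]
    abel
  · rintro ⟨Y, rfl⟩
    have e1 : Ab * A * Ab * A = Ab * A := by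
      calc Ab * A * Ab * A = Ab * (A * Ab * A) := by noncomm_ring
        _ = Ab * A := by rw [hAb1]
    have e2 : Y * A * Ab * A = Y * A := by
      calc Y * A * Ab * A = Y * (A * Ab * A) := by noncomm_ring
        _ = Y * A := by rw [hAb1]
    have e3 : Ab * A * Y * A * Ab * A = Ab * A * Y * A := by
      calc Ab * A * Y * A * Ab * A = Ab * A * Y * (A * Ab * A) := by noncomm_ring
        _ = Ab * A * Y * A := by rw [hAb1]
    have hAX : A * (Y + Ab * A * Ab - Ab * A * Y - Y * A * Ab
        + Ab * A * Y * A * Ab) = A * Ab := by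
      have c1 : A * (Ab * A * Ab) = A * Ab := by
        calc A * (Ab * A * Ab) = (A * Ab * A) * Ab := by noncomm_ring
          _ = A * Ab := by rw [hAb1]
      have c2 : A * (Ab * A * Y) = A * Y := by
        calc A * (Ab * A * Y) = (A * Ab * A) * Y := by noncomm_ring
          _ = A * Y := by rw [hAb1]
      have c3 : A * (Ab * A * Y * A * Ab) = A * (Y * A * Ab) := by
        calc A * (Ab * A * Y * A * Ab) = (A * Ab * A) * Y * A * Ab := by noncomm_ring
          _ = A * Y * A * Ab := by rw [hAb1]
          _ = A * (Y * A * Ab) := by noncomm_ring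
      simp only [mul_add, mul_sub, c1, c2, c3]
      abel
    have hXA : (Y + Ab * A * Ab - Ab * A * Y - Y * A * Ab
        + Ab * A * Y * A * Ab) * A = Ab * A := by
      simp only [add_mul, sub_mul, e1, e2, e3]
      abel
    constructor
    · rw [hAX, hAb1]
    · rw [hAX, hXA, hAbc]
end
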